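/- Let p be an odd prime, k ≥ 2 an integer, and q = kp − 1, so L = p(kp−1). Then for any two distinct g, h ∈ Z_p and every delay offset τ ∈ Z_L, |H_{s_g s_h}(τ) − (kp−1)/p| ≤ (p+1)/p; that is, the Hamming cross-correlation of any two distinct CRT sequences deviates from its mean value w²/L = (kp−1)/p by at most (p+1)/p, so the CRT sequence set of Construction 1 is ((p+1)/(kp−1))-uniform at most. -/

import Mathlib

/-- The characteristic set `I_{g,p,q} = {(g·t mod p, t mod q) : 0 ≤ t < q}` in `Z_p ⊕ Z_q`. -/
def crtIdx (p q : ℕ) (g : ZMod p) : Finset (ZMod p × ZMod q) :=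
  (Finset.range q).image (fun t : ℕ => ((g * (t : ZMod p), (t : ZMod q)) : ZMod p × ZMod q))

/-- The CRT sequence `s_g`: `s_g(t) = 1` iff `Φ_{p,q}(t) = (t mod p, t mod q) ∈ I_{g,p,q}`. -/
def crtSeq (p q : ℕ) (g : ZMod p) (t : ℕ) : ℕ :=
  if ((t : ZMod p), (t : ZMod q)) ∈ crtIdx p q g then 1 else 0

/-- Hamming correlation of two `L`-periodic sequences:
`H_{ab}(τ) = Σ_{t=0}^{L-1} a(t) b(t-τ)`, index `t-τ` computed mod `L`. -/
def hammingCorr (L : ℕ) (a b : ℕ → ℕ) (τ : ℕ) : ℕ :=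
  ∑ t ∈ Finset.range L, a t * b ((t + L - τ % L) % L)

/-- Two-dimensional Hamming cross-correlation
`H_{gh}(τ) = |I_{g,p,q} ∩ (I_{h,p,q} + τ)|` in `Z_p ⊕ Z_q`. -/
def H2 (p q : ℕ) (g h : ZMod p) (τ : ZMod p × ZMod q) : ℕ :=
  (crtIdx p q g ∩ (crtIdx p q h).image (fun x => x + τ)).card

/-- Distribution of the cross-correlation `H_{g1}` over all delay offsets. -/
def Ncross (p q : ℕ) (g : ZMod p) (j : ℕ) : ℕ :=
  ((Finset.range p ×ˢ Finset.range q).filter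
    (fun τ => H2 p q g 1 ((τ.1 : ZMod p), (τ.2 : ZMod q)) = j)).card

lemma zmod_eq_iff_modeq (p : ℕ) [NeZero p] (u : ℕ) (r : ZMod p) :
    ((u : ZMod p) = r) ↔ u ≡ r.val [MOD p] := by
  rw [show r = ((r.val : ℕ) : ZMod p) by simp [ZMod.natCast_val, ZMod.cast_id],
    ZMod.natCast_eq_natCast_iff]
  simp [ZMod.natCast_val, ZMod.cast_id]

lemma aux_count (p q b k : ℕ) (hp : 2 ≤ p) (hb : b ≤ q) (hq : q + 1 = k * p) (hk : 1 ≤ k)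
    (r1 r2 : ZMod p) :
    k - 1 ≤ ((Finset.range b).filter (fun (u : ℕ) => (u : ZMod p) = r1)).card
          + ((Finset.Ico b q).filter (fun (u : ℕ) => (u : ZMod p) = r2)).card ∧
    ((Finset.range b).filter (fun (u : ℕ) => (u : ZMod p) = r1)).card
          + ((Finset.Ico b q).filter (fun (u : ℕ) => (u : ZMod p) = r2)).card ≤ k + 1 := by
  haveI : NeZero p := ⟨by omega⟩
  have hp0 : 0 < p := by omega
  set m1 := r1.val with hm1
  set m2 := r2.val with hm2
  have hc1 : ((Finset.range b).filter (fun (u : ℕ) => (u : ZMod p) = r1)).card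
      = b / p + if m1 % p < b % p then 1 else 0 := by
    rw [show ((Finset.range b).filter (fun (u : ℕ) => (u : ZMod p) = r1))
        = ((Finset.range b).filter (fun (u : ℕ) => u ≡ m1 [MOD p])) by
      apply Finset.filter_congr; intro u _; simp [zmod_eq_iff_modeq, hm1]]
    rw [← Nat.count_eq_card_filter_range, Nat.count_modEq_card b hp0 m1]
  have hsplit : ((Finset.range b).filter (fun (u : ℕ) => (u : ZMod p) = r2)).card
      + ((Finset.Ico b q).filter (fun (u : ℕ) => (u : ZMod p) = r2)).card
      = ((Finset.range q).filter (fun (u : ℕ) => (u : ZMod p) = r2)).card := by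
    simp only [Finset.range_eq_Ico]
    rw [← Finset.Ico_union_Ico_eq_Ico (Nat.zero_le b) hb, Finset.filter_union,
      Finset.card_union_of_disjoint (Finset.disjoint_filter_filter
        (Finset.Ico_disjoint_Ico_consecutive 0 b q))]
  have hcb : ((Finset.range b).filter (fun (u : ℕ) => (u : ZMod p) = r2)).card
      = b / p + if m2 % p < b % p then 1 else 0 := by
    rw [show ((Finset.range b).filter (fun (u : ℕ) => (u : ZMod p) = r2))
        = ((Finset.range b).filter (fun (u : ℕ) => u ≡ m2 [MOD p])) by
      apply Finset.filter_congr; intro u _; simp [zmod_eq_iff_modeq, hm2]]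
    rw [← Nat.count_eq_card_filter_range, Nat.count_modEq_card b hp0 m2]
  have hcq : ((Finset.range q).filter (fun (u : ℕ) => (u : ZMod p) = r2)).card
      = q / p + if m2 % p < q % p then 1 else 0 := by
    rw [show ((Finset.range q).filter (fun (u : ℕ) => (u : ZMod p) = r2))
        = ((Finset.range q).filter (fun (u : ℕ) => u ≡ m2 [MOD p])) by
      apply Finset.filter_congr; intro u _; simp [zmod_eq_iff_modeq, hm2]]
    rw [← Nat.count_eq_card_filter_range, Nat.count_modEq_card q hp0 m2]
  have hq2 : q = p * (k - 1) + (p - 1) := by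
    have h1 : p * (k - 1) = p * k - p := by rw [Nat.mul_sub, Nat.mul_one]
    have h2 : p ≤ p * k := Nat.le_mul_of_pos_right p hk
    have h3 : k * p = p * k := Nat.mul_comm k p
    omega
  have hqd : q / p = k - 1 := by
    rw [hq2, Nat.mul_add_div hp0, Nat.div_eq_of_lt (by omega), Nat.add_zero]
  have hqm : q % p = p - 1 := by
    rw [hq2, Nat.mul_add_mod, Nat.mod_eq_of_lt (by omega)]
  rw [hqd, hqm] at hcq
  have hbm : b % p < p := Nat.mod_lt b hp0
  have hI : (if m2 % p < b % p then 1 else 0) ≤ (if m2 % p < p - 1 then (1:ℕ) else 0) := by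
    split_ifs <;> omega
  have hI1 : (if m1 % p < b % p then (1:ℕ) else 0) ≤ 1 := by split_ifs <;> omega
  have hI2 : (if m2 % p < p - 1 then (1:ℕ) else 0) ≤ 1 := by split_ifs <;> omega
  constructor <;> omega

lemma crtSeq_eq (p q : ℕ) (hq : 0 < q) (g : ZMod p) (t : ℕ) :
    crtSeq p q g t = if (t : ZMod p) = g * ((t % q : ℕ) : ZMod p) then 1 else 0 := by
  unfold crtSeq crtIdx
  congr 1
  simp only [Finset.mem_image, Finset.mem_range, Prod.mk.injEq, eq_iff_iff]
  constructor
  · rintro ⟨u, hu, h1, h2⟩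
    have hu2 : u = t % q := by
      have h3 := (ZMod.natCast_eq_natCast_iff u t q).mp h2
      have h4 : u % q = t % q := h3
      rwa [Nat.mod_eq_of_lt hu] at h4
    subst hu2
    exact h1.symm
  · intro h
    exact ⟨t % q, Nat.mod_lt _ hq, h.symm, by rw [ZMod.natCast_mod]⟩

theorem stmt19 (p k : ℕ) (hp : p.Prime) (hodd : Odd p) (hk : 2 ≤ k)
    (g h : ZMod p) (hgh : g ≠ h) (τ : ℕ) (hτ : τ < p * (k * p - 1)) :
    |(hammingCorr (p * (k * p - 1)) (crtSeq p (k * p - 1) g) (crtSeq p (k * p - 1) h) τ : ℚ)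
        - ((k * p - 1 : ℕ) : ℚ) / p| ≤ ((p : ℚ) + 1) / p := by
  haveI : Fact p.Prime := ⟨hp⟩
  have hp2 : 2 ≤ p := hp.two_le
  have hp0 : 0 < p := by omega
  set q : ℕ := k * p - 1 with hqdef
  have hkp : 4 ≤ k * p := Nat.mul_le_mul hk hp2
  have hq1 : q + 1 = k * p := by omega
  have hq0 : 0 < q := by omega
  set L : ℕ := p * q with hLdef
  have hL0 : 0 < L := Nat.mul_pos hp0 hq0
  have hpL : p ∣ L := ⟨q, rfl⟩
  have hqL : q ∣ L := ⟨p, Nat.mul_comm p q⟩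
  have hcop : Nat.Coprime p q := by
    have h1 : Nat.gcd p q ∣ k * p := Dvd.dvd.mul_left (Nat.gcd_dvd_left p q) k
    have h2 : Nat.gcd p q ∣ q := Nat.gcd_dvd_right p q
    have h3 : Nat.gcd p q ∣ 1 := by
      have h4 := Nat.dvd_sub h1 h2
      rwa [show k * p - q = 1 by omega] at h4
    exact Nat.dvd_one.mp h3
  have hτL : τ % L = τ := Nat.mod_eq_of_lt hτ
  have hτle : τ ≤ L := le_of_lt hτ
  set b : ℕ := τ % q with hbdef
  have hbq : b < q := Nat.mod_lt τ hq0
  have hLzero : ((L : ℕ) : ZMod p) = 0 := by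
    rw [hLdef, Nat.cast_mul, ZMod.natCast_self, zero_mul]
  -- Step 1: hammingCorr as a cardinality
  have hH : hammingCorr L (crtSeq p q g) (crtSeq p q h) τ
      = ((Finset.range L).filter (fun t : ℕ =>
          ((t : ZMod p) = g * ((t % q : ℕ) : ZMod p)) ∧
          ((((t + L - τ) % L : ℕ) : ZMod p)
            = h * ((((t + L - τ) % L) % q : ℕ) : ZMod p)))).card := by
    unfold hammingCorr
    rw [hτL, Finset.card_filter]
    apply Finset.sum_congr rfl
    intro t _
    rw [crtSeq_eq p q hq0, crtSeq_eq p q hq0]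
    by_cases h1 : (t : ZMod p) = g * ((t % q : ℕ) : ZMod p) <;>
      by_cases h2 : (((t + L - τ) % L : ℕ) : ZMod p)
          = h * ((((t + L - τ) % L) % q : ℕ) : ZMod p) <;>
      simp [h1, h2]
  -- Step 2: key equivalence
  have keyiff : ∀ t : ℕ, (t : ZMod p) = g * ((t % q : ℕ) : ZMod p) →
      (((((t + L - τ) % L : ℕ) : ZMod p) = h * ((((t + L - τ) % L) % q : ℕ) : ZMod p))
        ↔ (g * ((t % q : ℕ) : ZMod p) - (τ : ZMod p)
            = h * (((t % q + (q - b)) % q : ℕ) : ZMod p))) := by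
    intro t hg
    rw [show t + L - τ = t + (L - τ) from by omega]
    have hmodp : (((t + (L - τ)) % L : ℕ) : ZMod p) = (t : ZMod p) - (τ : ZMod p) := by
      have h1 : (t + (L - τ)) % L ≡ t + (L - τ) [MOD p] := (Nat.mod_modEq _ L).of_dvd hpL
      rw [(ZMod.natCast_eq_natCast_iff _ _ _).mpr h1, Nat.cast_add, Nat.cast_sub hτle,
        hLzero]
      ring
    have hmodq : ((t + (L - τ)) % L) % q = (t % q + (q - b)) % q := by
      have h2 : (t + (L - τ)) % L ≡ t + (L - τ) [MOD q] := (Nat.mod_modEq _ L).of_dvd hqL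
      have h3 : L - τ ≡ q - b [MOD q] := by
        apply Nat.ModEq.add_right_cancel' τ
        show ((L - τ) + τ) % q = ((q - b) + τ) % q
        have h5 : ((q - b) + τ) % q = ((q - b) + b) % q :=
          ((Nat.mod_modEq τ q).symm.add_left (q - b))
        rw [show (L - τ) + τ = L from by omega, h5, show (q - b) + b = q from by omega,
          hLdef, Nat.mul_mod_left, Nat.mod_self]
      exact h2.trans ((Nat.mod_modEq t q).symm.add h3)
    rw [hmodp, hmodq, hg]
  -- Step 3: bijection with the u-count
  have hST : ((Finset.range L).filter (fun t : ℕ =>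
          ((t : ZMod p) = g * ((t % q : ℕ) : ZMod p)) ∧
          ((((t + L - τ) % L : ℕ) : ZMod p)
            = h * ((((t + L - τ) % L) % q : ℕ) : ZMod p)))).card
      = ((Finset.range q).filter (fun u : ℕ =>
          g * ((u : ℕ) : ZMod p) - (τ : ZMod p)
            = h * (((u + (q - b)) % q : ℕ) : ZMod p))).card := by
    apply Finset.card_bij (fun t _ => t % q)
    · intro t ht
      simp only [Finset.mem_filter, Finset.mem_range] at ht ⊢
      obtain ⟨htL, hg', hh'⟩ := ht
      exact ⟨Nat.mod_lt _ hq0, (keyiff t hg').mp hh'⟩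
    · intro t1 h1 t2 h2 heq
      simp only [Finset.mem_filter, Finset.mem_range] at h1 h2
      have hpe : t1 ≡ t2 [MOD p] := by
        apply (ZMod.natCast_eq_natCast_iff t1 t2 p).mp
        rw [h1.2.1, h2.2.1, heq]
      have hqe : t1 ≡ t2 [MOD q] := heq
      have hLe : t1 ≡ t2 [MOD L] := by
        rw [hLdef]
        exact (Nat.modEq_and_modEq_iff_modEq_mul hcop).mp ⟨hpe, hqe⟩
      have e : t1 % L = t2 % L := hLe
      rwa [Nat.mod_eq_of_lt h1.1, Nat.mod_eq_of_lt h2.1] at e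
    · intro u hu
      simp only [Finset.mem_filter, Finset.mem_range] at hu
      obtain ⟨huq, hCc⟩ := hu
      obtain ⟨x, hxp, hxq⟩ := Nat.chineseRemainder hcop (g * (u : ZMod p)).val u
      have hxLq : (x % L) % q = u := by
        have h1 : x % L ≡ x [MOD q] := (Nat.mod_modEq x L).of_dvd hqL
        have h2 : (x % L) % q = u % q := h1.trans hxq
        rwa [Nat.mod_eq_of_lt huq] at h2
      have hxLp : ((x % L : ℕ) : ZMod p) = g * (u : ZMod p) := by
        have h1 : x % L ≡ (g * (u : ZMod p)).val [MOD p] :=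
          ((Nat.mod_modEq x L).of_dvd hpL).trans hxp
        rw [(ZMod.natCast_eq_natCast_iff _ _ _).mpr h1]
        simp [ZMod.natCast_val, ZMod.cast_id]
      have hgx : ((x % L : ℕ) : ZMod p) = g * (((x % L) % q : ℕ) : ZMod p) := by
        rw [hxLq, hxLp]
      refine ⟨x % L, ?_, hxLq⟩
      simp only [Finset.mem_filter, Finset.mem_range]
      refine ⟨Nat.mod_lt x hL0, hgx, ?_⟩
      exact (keyiff _ hgx).mpr (by rw [hxLq]; exact hCc)
  -- Step 4: transform conditions into residue classes and count
  have hd : g - h ≠ 0 := sub_ne_zero.mpr hgh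
  have hqcast : ((q : ℕ) : ZMod p) = -1 := by
    have : ((q : ℕ) : ZMod p) + 1 = 0 := by
      rw [show (1 : ZMod p) = ((1 : ℕ) : ZMod p) from by norm_num, ← Nat.cast_add, hq1,
        Nat.cast_mul, ZMod.natCast_self, mul_zero]
    linear_combination this
  let r1 : ZMod p := (g - h)⁻¹ * ((τ : ZMod p) + h * (((q - b : ℕ) : ZMod p)))
  let r2 : ZMod p := (g - h)⁻¹ * ((τ : ZMod p) - h * ((b : ℕ) : ZMod p))
  have hr1 : r1 = (g - h)⁻¹ * ((τ : ZMod p) + h * (((q - b : ℕ) : ZMod p))) := rfl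
  have hr2 : r2 = (g - h)⁻¹ * ((τ : ZMod p) - h * ((b : ℕ) : ZMod p)) := rfl
  have hsplitT : ((Finset.range q).filter (fun u : ℕ =>
          g * ((u : ℕ) : ZMod p) - (τ : ZMod p)
            = h * (((u + (q - b)) % q : ℕ) : ZMod p))).card
      = ((Finset.range b).filter (fun (u : ℕ) => (u : ZMod p) = r1)).card
        + ((Finset.Ico b q).filter (fun (u : ℕ) => (u : ZMod p) = r2)).card := by
    have e1 : (Finset.range b).filter (fun u : ℕ =>
          g * ((u : ℕ) : ZMod p) - (τ : ZMod p)
            = h * (((u + (q - b)) % q : ℕ) : ZMod p))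
        = (Finset.range b).filter (fun (u : ℕ) => (u : ZMod p) = r1) := by
      apply Finset.filter_congr
      intro u hu
      simp only [Finset.mem_range] at hu
      have hv : (u + (q - b)) % q = u + (q - b) := Nat.mod_eq_of_lt (by omega)
      rw [hv, Nat.cast_add, hr1, eq_inv_mul_iff_mul_eq₀ hd]
      constructor <;> intro hh <;> linear_combination hh
    have e2 : (Finset.Ico b q).filter (fun u : ℕ =>
          g * ((u : ℕ) : ZMod p) - (τ : ZMod p)
            = h * (((u + (q - b)) % q : ℕ) : ZMod p))
        = (Finset.Ico b q).filter (fun (u : ℕ) => (u : ZMod p) = r2) := by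
      apply Finset.filter_congr
      intro u hu
      simp only [Finset.mem_Ico] at hu
      have hv : (u + (q - b)) % q = u - b := by
        rw [show u + (q - b) = q + (u - b) from by omega, Nat.add_mod_left,
          Nat.mod_eq_of_lt (by omega)]
      rw [hv, Nat.cast_sub hu.1, hr2, eq_inv_mul_iff_mul_eq₀ hd]
      constructor <;> intro hh <;> linear_combination hh
    simp only [Finset.range_eq_Ico]
    rw [← Finset.Ico_union_Ico_eq_Ico (Nat.zero_le b) hbq.le, Finset.filter_union,
      Finset.card_union_of_disjoint (Finset.disjoint_filter_filter
        (Finset.Ico_disjoint_Ico_consecutive 0 b q))]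
    rw [← Finset.range_eq_Ico, e1, e2]
  obtain ⟨hlow, hhigh⟩ := aux_count p q b k hp2 hbq.le hq1 (by omega) r1 r2
  set N : ℕ := hammingCorr L (crtSeq p q g) (crtSeq p q h) τ with hN
  have hNeq : N = ((Finset.range b).filter (fun (u : ℕ) => (u : ZMod p) = r1)).card
        + ((Finset.Ico b q).filter (fun (u : ℕ) => (u : ZMod p) = r2)).card :=
    hH.trans (hST.trans hsplitT)
  have hNlow : k - 1 ≤ N := hNeq ▸ hlow
  have hNhigh : N ≤ k + 1 := hNeq ▸ hhigh
  -- Final rational estimate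
  have hp0Q : (0 : ℚ) < p := by exact_mod_cast hp0
  have hAq : ((q : ℕ) : ℚ) = (k : ℚ) * p - 1 := by
    have : ((q : ℕ) : ℚ) + 1 = ((q + 1 : ℕ) : ℚ) := by push_cast; ring
    have h2 : ((q + 1 : ℕ) : ℚ) = (k : ℚ) * p := by rw [hq1]; push_cast; ring
    linarith [this, h2]
  have hN1 : (k : ℚ) - 1 ≤ (N : ℚ) := by
    have : ((k - 1 : ℕ) : ℚ) ≤ (N : ℚ) := by exact_mod_cast hNlow
    have h2 : ((k - 1 : ℕ) : ℚ) = (k : ℚ) - 1 := by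
      rw [Nat.cast_sub (by omega)]; norm_num
    linarith [this, h2.symm.le]
  have hN2 : (N : ℚ) ≤ (k : ℚ) + 1 := by exact_mod_cast hNhigh
  rw [abs_le]
  constructor
  · rw [neg_le, neg_sub]
    have h1 : ((q : ℕ) : ℚ) / p ≤ (k : ℚ) := by
      rw [div_le_iff₀ hp0Q, hAq]; linarith
    have h2 : (1 : ℚ) ≤ ((p : ℚ) + 1) / p := by
      rw [le_div_iff₀ hp0Q]; linarith
    linarith
  · rw [sub_le_iff_le_add, ← add_div]
    rw [le_div_iff₀ hp0Q, hAq]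
    nlinarith [hN2, hp0Q]
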